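/- arXiv:2212.12699 — 4 statements merged into one kernel-verified Lean document; each statement's English description precedes it below -/
import Mathlib

section
/- Let A, B be associative unital algebras and σ : A⊗B → B⊗A a linear map satisfying σ∘(μ_A⊗id) = (id⊗μ_A)∘σ₁₂∘σ₂₃ on A⊗A⊗B, σ∘(id⊗μ_B) = (μ_B⊗id)∘σ₂₃∘σ₁₂ on A⊗B⊗B, σ(1_A⊗b) = b⊗1_A, and σ(a⊗1_B) = 1_B⊗a. Then the product on B⊗A defined by (b⊗a)*(b'⊗a') := (μ_B⊗μ_A)∘(id_B⊗σ⊗id_A)(b⊗a⊗b'⊗a') is associative with unit 1_B⊗1_A. -/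
open TensorProduct

section

variable (k : Type*) [Field k] (A B : Type*)
  [Ring A] [Algebra k A] [Ring B] [Algebra k B]

/-- The product on `B ⊗ A` built from the permutation map `σ : A ⊗ B → B ⊗ A`:
`(b ⊗ a) * (b' ⊗ a') = (μ_B ⊗ μ_A)(id_B ⊗ σ ⊗ id_A)(b ⊗ a ⊗ b' ⊗ a')`. -/
noncomputable def doubleMul (σ : A ⊗[k] B →ₗ[k] B ⊗[k] A) :
    (B ⊗[k] A) ⊗[k] (B ⊗[k] A) →ₗ[k] B ⊗[k] A :=
  (TensorProduct.map (LinearMap.mul' k B) LinearMap.id) ∘ₗ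
  (TensorProduct.assoc k B B A).symm.toLinearMap ∘ₗ
  (TensorProduct.map LinearMap.id (TensorProduct.map LinearMap.id (LinearMap.mul' k A))) ∘ₗ
  (TensorProduct.map LinearMap.id (TensorProduct.assoc k B A A).toLinearMap) ∘ₗ
  (TensorProduct.map LinearMap.id (TensorProduct.map σ LinearMap.id)) ∘ₗ
  (TensorProduct.map LinearMap.id (TensorProduct.assoc k A B A).symm.toLinearMap) ∘ₗ
  (TensorProduct.assoc k B A (B ⊗[k] A)).toLinearMap

variable {k A B}
variable (σ : A ⊗[k] B →ₗ[k] B ⊗[k] A)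

lemma tw_map_map (f f' : B →ₗ[k] B) (g g' : A →ₗ[k] A) (z : B ⊗[k] A) :
    TensorProduct.map f g (TensorProduct.map f' g' z)
      = TensorProduct.map (f ∘ₗ f') (g ∘ₗ g') z := by
  rw [TensorProduct.map_comp, LinearMap.comp_apply]

lemma tw_mulLeft_comp (b c : B) :
    LinearMap.mulLeft k (b * c) = LinearMap.mulLeft k b ∘ₗ LinearMap.mulLeft k c := by
  ext x; simp [mul_assoc]

lemma tw_mulRight_comp (f a : A) :
    LinearMap.mulRight k (f * a) = LinearMap.mulRight k a ∘ₗ LinearMap.mulRight k f := by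
  ext x; simp [mul_assoc]

lemma dm_aux (b : B) (a' : A) (z : B ⊗[k] A) :
    (TensorProduct.map (LinearMap.mul' k B) LinearMap.id)
      ((TensorProduct.assoc k B B A).symm
        (b ⊗ₜ[k] (TensorProduct.map LinearMap.id (LinearMap.mul' k A))
          ((TensorProduct.assoc k B A A) (z ⊗ₜ[k] a'))))
      = TensorProduct.map (LinearMap.mulLeft k b) (LinearMap.mulRight k a') z := by
  induction z using TensorProduct.induction_on with
  | zero => simp only [zero_tmul, LinearEquiv.map_zero, LinearMap.map_zero, tmul_zero]
  | tmul c d => simp [LinearMap.mul'_apply]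
  | add u v hu hv =>
    simp only [add_tmul, tmul_add, LinearEquiv.map_add, LinearMap.map_add, hu, hv]

lemma dm_tmul (b : B) (a : A) (b' : B) (a' : A) :
    doubleMul k A B σ ((b ⊗ₜ a) ⊗ₜ (b' ⊗ₜ a'))
      = TensorProduct.map (LinearMap.mulLeft k b) (LinearMap.mulRight k a') (σ (a ⊗ₜ b')) := by
  simp only [doubleMul, LinearMap.comp_apply, assoc_tmul, assoc_symm_tmul, map_tmul,
    LinearMap.id_coe, id_eq]
  exact dm_aux b a' _

lemma tw_s1
    (hax1 : σ ∘ₗ (TensorProduct.map (LinearMap.mul' k A) LinearMap.id)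
      = (TensorProduct.map LinearMap.id (LinearMap.mul' k A)) ∘ₗ
        (TensorProduct.assoc k B A A).toLinearMap ∘ₗ
        (TensorProduct.map σ LinearMap.id) ∘ₗ
        (TensorProduct.assoc k A B A).symm.toLinearMap ∘ₗ
        (TensorProduct.map LinearMap.id σ) ∘ₗ
        (TensorProduct.assoc k A A B).toLinearMap)
    (a a' : A) (b : B) :
    σ ((a * a') ⊗ₜ[k] b)
      = (TensorProduct.map LinearMap.id (LinearMap.mul' k A))
          ((TensorProduct.assoc k B A A)
            ((TensorProduct.map σ LinearMap.id)
              ((TensorProduct.assoc k A B A).symm (a ⊗ₜ[k] σ (a' ⊗ₜ[k] b))))) := by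
  have h := LinearMap.congr_fun hax1 ((a ⊗ₜ[k] a') ⊗ₜ[k] b)
  simpa [LinearMap.mul'_apply] using h

lemma tw_s2
    (hax2 : σ ∘ₗ (TensorProduct.map LinearMap.id (LinearMap.mul' k B))
      = (TensorProduct.map (LinearMap.mul' k B) LinearMap.id) ∘ₗ
        (TensorProduct.assoc k B B A).symm.toLinearMap ∘ₗ
        (TensorProduct.map LinearMap.id σ) ∘ₗ
        (TensorProduct.assoc k B A B).toLinearMap ∘ₗ
        (TensorProduct.map σ LinearMap.id) ∘ₗ
        (TensorProduct.assoc k A B B).symm.toLinearMap)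
    (a : A) (b b' : B) :
    σ (a ⊗ₜ[k] (b * b'))
      = (TensorProduct.map (LinearMap.mul' k B) LinearMap.id)
          ((TensorProduct.assoc k B B A).symm
            ((TensorProduct.map LinearMap.id σ)
              ((TensorProduct.assoc k B A B) (σ (a ⊗ₜ[k] b) ⊗ₜ[k] b')))) := by
  have h := LinearMap.congr_fun hax2 (a ⊗ₜ[k] (b ⊗ₜ[k] b'))
  simpa [LinearMap.mul'_apply] using h

lemma tw_aux2 (f : A) (z : B ⊗[k] A) :
    (TensorProduct.map LinearMap.id (LinearMap.mul' k A))
        ((TensorProduct.assoc k B A A) (z ⊗ₜ[k] f))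
      = TensorProduct.map LinearMap.id (LinearMap.mulRight k f) z := by
  induction z using TensorProduct.induction_on with
  | zero => simp only [zero_tmul, LinearEquiv.map_zero, LinearMap.map_zero]
  | tmul c d => simp [LinearMap.mul'_apply]
  | add u v hu hv =>
    simp only [add_tmul, LinearEquiv.map_add, LinearMap.map_add, hu, hv]

lemma tw_aux3 (c : B) (z : B ⊗[k] A) :
    (TensorProduct.map (LinearMap.mul' k B) LinearMap.id)
        ((TensorProduct.assoc k B B A).symm (c ⊗ₜ[k] z))
      = TensorProduct.map (LinearMap.mulLeft k c) LinearMap.id z := by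
  induction z using TensorProduct.induction_on with
  | zero => simp only [tmul_zero, LinearEquiv.map_zero, LinearMap.map_zero]
  | tmul e d => simp [LinearMap.mul'_apply]
  | add u v hu hv =>
    simp only [tmul_add, LinearEquiv.map_add, LinearMap.map_add, hu, hv]

lemma tw_L (b : B) (x z : B ⊗[k] A) :
    doubleMul k A B σ ((TensorProduct.map (LinearMap.mulLeft k b) LinearMap.id x) ⊗ₜ z)
      = TensorProduct.map (LinearMap.mulLeft k b) LinearMap.id (doubleMul k A B σ (x ⊗ₜ z)) := by
  induction x using TensorProduct.induction_on with
  | zero => simp only [LinearMap.map_zero, zero_tmul]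
  | tmul c d =>
    induction z using TensorProduct.induction_on with
    | zero => simp only [tmul_zero, LinearMap.map_zero]
    | tmul b'' a'' =>
      rw [map_tmul, LinearMap.id_coe, id_eq, LinearMap.mulLeft_apply, dm_tmul, dm_tmul,
        tw_map_map, tw_mulLeft_comp, LinearMap.id_comp]
    | add u v hu hv =>
      simp only [tmul_add, LinearMap.map_add, hu, hv]
  | add u v hu hv =>
    simp only [LinearMap.map_add, add_tmul, hu, hv]

lemma tw_R (a₀ : A) (x z : B ⊗[k] A) :
    doubleMul k A B σ (x ⊗ₜ (TensorProduct.map LinearMap.id (LinearMap.mulRight k a₀) z))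
      = TensorProduct.map LinearMap.id (LinearMap.mulRight k a₀) (doubleMul k A B σ (x ⊗ₜ z)) := by
  induction x using TensorProduct.induction_on with
  | zero => simp only [zero_tmul, LinearMap.map_zero]
  | tmul c d =>
    induction z using TensorProduct.induction_on with
    | zero => simp only [LinearMap.map_zero, tmul_zero]
    | tmul b'' a'' =>
      rw [map_tmul, LinearMap.id_coe, id_eq, LinearMap.mulRight_apply, dm_tmul, dm_tmul,
        tw_map_map, tw_mulRight_comp, LinearMap.id_comp]
    | add u v hu hv =>
      simp only [LinearMap.map_add, tmul_add, hu, hv]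
  | add u v hu hv =>
    simp only [add_tmul, LinearMap.map_add, hu, hv]

lemma tw_core1_aux (c : B) (d : A) (a'' : A) (y : B ⊗[k] A) :
    TensorProduct.map (LinearMap.mulLeft k c) (LinearMap.mulRight k a'')
        ((TensorProduct.map LinearMap.id (LinearMap.mul' k A))
          ((TensorProduct.assoc k B A A)
            ((TensorProduct.map σ LinearMap.id)
              ((TensorProduct.assoc k A B A).symm (d ⊗ₜ[k] y)))))
      = doubleMul k A B σ
          ((c ⊗ₜ d) ⊗ₜ (TensorProduct.map LinearMap.id (LinearMap.mulRight k a'') y)) := by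
  induction y using TensorProduct.induction_on with
  | zero => simp only [tmul_zero, LinearEquiv.map_zero, LinearMap.map_zero]
  | tmul e f =>
    rw [assoc_symm_tmul, map_tmul, LinearMap.id_coe, id_eq, tw_aux2, tw_map_map,
      map_tmul, LinearMap.id_coe, id_eq, LinearMap.mulRight_apply, dm_tmul,
      tw_mulRight_comp, LinearMap.comp_id]
  | add u v hu hv =>
    simp only [tmul_add, LinearEquiv.map_add, LinearMap.map_add, hu, hv]

lemma tw_core1
    (hax1 : σ ∘ₗ (TensorProduct.map (LinearMap.mul' k A) LinearMap.id)
      = (TensorProduct.map LinearMap.id (LinearMap.mul' k A)) ∘ₗ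
        (TensorProduct.assoc k B A A).toLinearMap ∘ₗ
        (TensorProduct.map σ LinearMap.id) ∘ₗ
        (TensorProduct.assoc k A B A).symm.toLinearMap ∘ₗ
        (TensorProduct.map LinearMap.id σ) ∘ₗ
        (TensorProduct.assoc k A A B).toLinearMap)
    (x : B ⊗[k] A) (a' : A) (b'' : B) (a'' : A) :
    doubleMul k A B σ
        ((TensorProduct.map LinearMap.id (LinearMap.mulRight k a') x) ⊗ₜ (b'' ⊗ₜ a''))
      = doubleMul k A B σ
          (x ⊗ₜ (TensorProduct.map LinearMap.id (LinearMap.mulRight k a'') (σ (a' ⊗ₜ b'')))) := by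
  induction x using TensorProduct.induction_on with
  | zero => simp only [LinearMap.map_zero, zero_tmul]
  | tmul c d =>
    rw [map_tmul, LinearMap.id_coe, id_eq, LinearMap.mulRight_apply, dm_tmul,
      tw_s1 σ hax1 d a' b'', tw_core1_aux]
  | add u v hu hv =>
    simp only [LinearMap.map_add, add_tmul, hu, hv]

lemma tw_core2_aux (c : B) (e : B) (f : A) (x : B ⊗[k] A) :
    TensorProduct.map (LinearMap.mulLeft k c) (LinearMap.mulRight k f)
        ((TensorProduct.map (LinearMap.mul' k B) LinearMap.id)
          ((TensorProduct.assoc k B B A).symm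
            ((TensorProduct.map LinearMap.id σ)
              ((TensorProduct.assoc k B A B) (x ⊗ₜ[k] e)))))
      = doubleMul k A B σ
          ((TensorProduct.map (LinearMap.mulLeft k c) LinearMap.id x) ⊗ₜ (e ⊗ₜ f)) := by
  induction x using TensorProduct.induction_on with
  | zero => simp only [zero_tmul, LinearEquiv.map_zero, LinearMap.map_zero]
  | tmul c' d' =>
    rw [assoc_tmul, map_tmul, LinearMap.id_coe, id_eq, tw_aux3, tw_map_map,
      map_tmul, LinearMap.id_coe, id_eq, LinearMap.mulLeft_apply, dm_tmul,
      tw_mulLeft_comp, LinearMap.comp_id]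
  | add u v hu hv =>
    simp only [add_tmul, LinearEquiv.map_add, LinearMap.map_add, hu, hv]

lemma tw_core2
    (hax2 : σ ∘ₗ (TensorProduct.map LinearMap.id (LinearMap.mul' k B))
      = (TensorProduct.map (LinearMap.mul' k B) LinearMap.id) ∘ₗ
        (TensorProduct.assoc k B B A).symm.toLinearMap ∘ₗ
        (TensorProduct.map LinearMap.id σ) ∘ₗ
        (TensorProduct.assoc k B A B).toLinearMap ∘ₗ
        (TensorProduct.map σ LinearMap.id) ∘ₗ
        (TensorProduct.assoc k A B B).symm.toLinearMap)
    (c : B) (d : A) (b' : B) (z : B ⊗[k] A) :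
    doubleMul k A B σ
        ((c ⊗ₜ d) ⊗ₜ (TensorProduct.map (LinearMap.mulLeft k b') LinearMap.id z))
      = doubleMul k A B σ
          ((TensorProduct.map (LinearMap.mulLeft k c) LinearMap.id (σ (d ⊗ₜ b'))) ⊗ₜ z) := by
  induction z using TensorProduct.induction_on with
  | zero => simp only [LinearMap.map_zero, tmul_zero, zero_tmul]
  | tmul e f =>
    rw [map_tmul, LinearMap.id_coe, id_eq, LinearMap.mulLeft_apply, dm_tmul,
      tw_s2 σ hax2 d b' e, tw_core2_aux]
  | add u v hu hv =>
    simp only [LinearMap.map_add, tmul_add, hu, hv]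


variable (k A B)

theorem stmt_9 (σ : A ⊗[k] B →ₗ[k] B ⊗[k] A)
    -- σ ∘ (μ_A ⊗ id) = (id ⊗ μ_A) ∘ σ₁₂ ∘ σ₂₃  on A ⊗ A ⊗ B
    (hax1 : σ ∘ₗ (TensorProduct.map (LinearMap.mul' k A) LinearMap.id)
      = (TensorProduct.map LinearMap.id (LinearMap.mul' k A)) ∘ₗ
        (TensorProduct.assoc k B A A).toLinearMap ∘ₗ
        (TensorProduct.map σ LinearMap.id) ∘ₗ
        (TensorProduct.assoc k A B A).symm.toLinearMap ∘ₗ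
        (TensorProduct.map LinearMap.id σ) ∘ₗ
        (TensorProduct.assoc k A A B).toLinearMap)
    -- σ ∘ (id ⊗ μ_B) = (μ_B ⊗ id) ∘ σ₂₃ ∘ σ₁₂  on A ⊗ B ⊗ B
    (hax2 : σ ∘ₗ (TensorProduct.map LinearMap.id (LinearMap.mul' k B))
      = (TensorProduct.map (LinearMap.mul' k B) LinearMap.id) ∘ₗ
        (TensorProduct.assoc k B B A).symm.toLinearMap ∘ₗ
        (TensorProduct.map LinearMap.id σ) ∘ₗ
        (TensorProduct.assoc k B A B).toLinearMap ∘ₗ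
        (TensorProduct.map σ LinearMap.id) ∘ₗ
        (TensorProduct.assoc k A B B).symm.toLinearMap)
    (hax3 : ∀ b : B, σ ((1 : A) ⊗ₜ[k] b) = b ⊗ₜ[k] (1 : A))
    (hax4 : ∀ a : A, σ (a ⊗ₜ[k] (1 : B)) = (1 : B) ⊗ₜ[k] a) :
    (doubleMul k A B σ) ∘ₗ (TensorProduct.map (doubleMul k A B σ) LinearMap.id)
      = (doubleMul k A B σ) ∘ₗ (TensorProduct.map LinearMap.id (doubleMul k A B σ)) ∘ₗ
        (TensorProduct.assoc k (B ⊗[k] A) (B ⊗[k] A) (B ⊗[k] A)).toLinearMap ∧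
    (∀ x : B ⊗[k] A,
      doubleMul k A B σ (((1 : B) ⊗ₜ[k] (1 : A)) ⊗ₜ[k] x) = x ∧
      doubleMul k A B σ (x ⊗ₜ[k] ((1 : B) ⊗ₜ[k] (1 : A))) = x) := by
  constructor
  · apply TensorProduct.ext_threefold
    intro x y z
    simp only [LinearMap.comp_apply, map_tmul, assoc_tmul, LinearEquiv.coe_coe,
      LinearMap.id_coe, id_eq]
    induction x using TensorProduct.induction_on with
    | zero => simp only [zero_tmul, LinearMap.map_zero]
    | add u v hu hv => simp only [add_tmul, LinearMap.map_add, hu, hv]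
    | tmul b a =>
      induction y using TensorProduct.induction_on with
      | zero => simp only [zero_tmul, tmul_zero, LinearMap.map_zero]
      | add u v hu hv => simp only [add_tmul, tmul_add, LinearMap.map_add, hu, hv]
      | tmul b' a' =>
        induction z using TensorProduct.induction_on with
        | zero => simp only [tmul_zero, LinearMap.map_zero]
        | add u v hu hv => simp only [tmul_add, LinearMap.map_add, hu, hv]
        | tmul b'' a'' =>
          rw [dm_tmul σ b a b' a', dm_tmul σ b' a' b'' a'']
          have h1 : TensorProduct.map (LinearMap.mulLeft k b) (LinearMap.mulRight k a')
              (σ (a ⊗ₜ[k] b'))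
              = TensorProduct.map (LinearMap.mulLeft k b) LinearMap.id
                (TensorProduct.map LinearMap.id (LinearMap.mulRight k a') (σ (a ⊗ₜ[k] b'))) := by
            rw [tw_map_map, LinearMap.comp_id, LinearMap.id_comp]
          have h2 : TensorProduct.map (LinearMap.mulLeft k b') (LinearMap.mulRight k a'')
              (σ (a' ⊗ₜ[k] b''))
              = TensorProduct.map LinearMap.id (LinearMap.mulRight k a'')
                (TensorProduct.map (LinearMap.mulLeft k b') LinearMap.id (σ (a' ⊗ₜ[k] b''))) := by
            rw [tw_map_map, LinearMap.comp_id, LinearMap.id_comp]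
          rw [h1, h2, tw_L, tw_core1 σ hax1, tw_R, tw_R, tw_core2 σ hax2, tw_L,
            tw_map_map, tw_map_map, LinearMap.comp_id, LinearMap.id_comp,
            LinearMap.comp_id, LinearMap.id_comp]
  · intro x
    constructor
    · induction x using TensorProduct.induction_on with
      | zero => simp only [tmul_zero, LinearMap.map_zero]
      | tmul b a =>
        rw [dm_tmul, hax3, map_tmul, LinearMap.mulLeft_apply, LinearMap.mulRight_apply,
          one_mul, one_mul]
      | add u v hu hv => simp only [tmul_add, LinearMap.map_add, hu, hv]
    · induction x using TensorProduct.induction_on with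
      | zero => simp only [zero_tmul, LinearMap.map_zero]
      | tmul b a =>
        rw [dm_tmul, hax4, map_tmul, LinearMap.mulLeft_apply, LinearMap.mulRight_apply,
          mul_one, mul_one]
      | add u v hu hv => simp only [add_tmul, LinearMap.map_add, hu, hv]

end
end

section
/- Suppose the anticommutation-style relations hold in an associative algebra: R₁₂ x₍₁₎x₍₂₎ = q x₍₁₎x₍₂₎, x⟨₂|x⟨₁|R₁₂ = q x⟨₂|x⟨₁|, and x⟨₁|R₁₂x₍₁₎ = q⁻¹ x₍₂₎x⟨₂| + I, where R satisfies the braid relation and the Hecke condition. Then (R₂₃ - qI₂₃) x₍₂₎x₍₃₎ x⟨₃| = q² x⟨₁| R₁₂R₂₃ (R₁₂ - qI₁₂) x₍₁₎x₍₂₎. In index form: for generators xᵢ, xʲ of an algebra satisfying R_{ij}^{kl}x_k x_l = q x_i x_j and x^a R_{ai}^{bj} x_b = q⁻¹ x_i x^j + δ_i^j, the ideal generated by the relations R_{ij}^{kl}x_k x_l - q x_i x_j is stable under right multiplication by any x^m modulo the permutation relations. -/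
open Finset

/-- Kronecker delta. -/
def kd {N : ℕ} (i j : Fin N) : ℂ := if i = j then 1 else 0

private lemma sum_rot12 {β M : Type*} [Fintype β] [AddCommMonoid M]
    (f : β → β → β → M) :
    (∑ k, ∑ l, ∑ b, f k l b) = ∑ b, ∑ k, ∑ l, f k l b := by
  calc (∑ k, ∑ l, ∑ b, f k l b)
      = ∑ k, ∑ b, ∑ l, f k l b := Finset.sum_congr rfl fun k _ => Finset.sum_comm
    _ = ∑ b, ∑ k, ∑ l, f k l b := Finset.sum_comm

private lemma sum_perm4 {β M : Type*} [Fintype β] [AddCommMonoid M]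
    (f : β → β → β → β → M) :
    (∑ a, ∑ b, ∑ c, ∑ d, f a b c d) = ∑ c, ∑ d, ∑ b, ∑ a, f a b c d := by
  calc (∑ a, ∑ b, ∑ c, ∑ d, f a b c d)
      = ∑ a, ∑ c, ∑ b, ∑ d, f a b c d :=
        Finset.sum_congr rfl fun _ _ => Finset.sum_comm
    _ = ∑ c, ∑ a, ∑ b, ∑ d, f a b c d := Finset.sum_comm
    _ = ∑ c, ∑ a, ∑ d, ∑ b, f a b c d :=
        Finset.sum_congr rfl fun _ _ => Finset.sum_congr rfl fun _ _ => Finset.sum_comm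
    _ = ∑ c, ∑ d, ∑ a, ∑ b, f a b c d :=
        Finset.sum_congr rfl fun _ _ => Finset.sum_comm
    _ = ∑ c, ∑ d, ∑ b, ∑ a, f a b c d :=
        Finset.sum_congr rfl fun _ _ => Finset.sum_congr rfl fun _ _ => Finset.sum_comm

private lemma sum_rot23 {β M : Type*} [Fintype β] [AddCommMonoid M]
    (f : β → β → β → β → β → M) :
    (∑ k, ∑ l, ∑ c, ∑ d, ∑ b, f k l c d b)
      = ∑ c, ∑ d, ∑ b, ∑ k, ∑ l, f k l c d b := by
  calc (∑ k, ∑ l, ∑ c, ∑ d, ∑ b, f k l c d b)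
      = ∑ k, ∑ c, ∑ l, ∑ d, ∑ b, f k l c d b :=
        Finset.sum_congr rfl fun _ _ => Finset.sum_comm
    _ = ∑ c, ∑ k, ∑ l, ∑ d, ∑ b, f k l c d b := Finset.sum_comm
    _ = ∑ c, ∑ k, ∑ d, ∑ l, ∑ b, f k l c d b :=
        Finset.sum_congr rfl fun _ _ => Finset.sum_congr rfl fun _ _ => Finset.sum_comm
    _ = ∑ c, ∑ d, ∑ k, ∑ l, ∑ b, f k l c d b :=
        Finset.sum_congr rfl fun _ _ => Finset.sum_comm
    _ = ∑ c, ∑ d, ∑ k, ∑ b, ∑ l, f k l c d b :=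
        Finset.sum_congr rfl fun _ _ => Finset.sum_congr rfl fun _ _ =>
          Finset.sum_congr rfl fun _ _ => Finset.sum_comm
    _ = ∑ c, ∑ d, ∑ b, ∑ k, ∑ l, f k l c d b :=
        Finset.sum_congr rfl fun _ _ => Finset.sum_congr rfl fun _ _ => Finset.sum_comm

set_option maxHeartbeats 1000000 in
theorem stmt_11 (N : ℕ) (A : Type*) [Ring A] [Algebra ℂ A]
    (q : ℂ) (hq0 : q ≠ 0) (hq1 : q ≠ 1) (hq2 : q ≠ -1)
    (R : Fin N → Fin N → Fin N → Fin N → ℂ)   -- R i j k l = R_{ij}^{kl}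
    (x : Fin N → A)    -- creation generators x_i
    (xd : Fin N → A)   -- annihilation generators x^i
    -- braid relation R₁₂R₂₃R₁₂ = R₂₃R₁₂R₂₃ in components
    (hbraid : ∀ i j k l m n : Fin N,
      ∑ a, ∑ b, ∑ e, R i j a b * R b k e n * R a e l m
        = ∑ a, ∑ b, ∑ c, R j k a b * R i a l c * R c b m n)
    -- Hecke condition: R² = (q - q⁻¹)R + I
    (hHecke : ∀ i j k l : Fin N,
      ∑ a, ∑ b, R i j a b * R a b k l = (q - q⁻¹) * R i j k l + kd i k * kd j l)
    -- R₁₂ x₍₁₎x₍₂₎ = q x₍₁₎x₍₂₎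
    (hsym : ∀ i j : Fin N,
      ∑ k, ∑ l, R i j k l • (x k * x l) = q • (x i * x j))
    -- x⟨₂|x⟨₁|R₁₂ = q x⟨₂|x⟨₁|
    (hdual : ∀ i j : Fin N,
      ∑ k, ∑ l, R k l i j • (xd l * xd k) = q • (xd j * xd i))
    -- x⟨₁|R₁₂x₍₁₎ = q⁻¹ x₍₂₎x⟨₂| + I
    (hperm : ∀ i j : Fin N,
      ∑ a, ∑ b, R a i b j • (xd a * x b)
        = q⁻¹ • (x i * xd j) + algebraMap ℂ A (kd i j)) :
    -- (R₂₃ - qI₂₃) x₍₂₎x₍₃₎ x⟨₃| = q² x⟨₁| R₁₂R₂₃ (R₁₂ - qI₁₂) x₍₁₎x₍₂₎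
    ∀ i j m : Fin N,
      ∑ k, ∑ l, (R i j k l - q * (kd i k * kd j l)) • (x k * x l * xd m)
        = (q ^ 2) • ∑ a, ∑ b, ∑ k,
            (∑ c, ∑ d, ∑ g,
              R a i c d * R d j g m * (R c g b k - q * (kd c b * kd g k)))
              • (xd a * (x b * x k)) := by
  have hqi : q * q⁻¹ = 1 := mul_inv_cancel₀ hq0
  have move1 : ∀ l m' : Fin N, x l * xd m'
      = q • (∑ a, ∑ b, R a l b m' • (xd a * x b)) - (q * kd l m') • (1 : A) := by
    intro l m'
    have h2 : q • (∑ a, ∑ b, R a l b m' • (xd a * x b))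
        = x l * xd m' + (q * kd l m') • (1 : A) := by
      rw [hperm l m', smul_add, smul_smul, hqi, one_smul,
        Algebra.algebraMap_eq_smul_one, smul_smul]
    rw [h2]; abel
  have move2a : ∀ k a b : Fin N, x k * (xd a * x b)
      = q • (∑ c, ∑ d, R c k d a • (xd c * (x d * x b))) - (q * kd k a) • x b := by
    intro k a b
    rw [← mul_assoc, move1 k a]
    simp only [sub_mul, smul_mul_assoc, Finset.sum_mul, one_mul, mul_assoc]
  intro i j m
  have move2 : ∀ k l : Fin N, x k * x l * xd m
      = (q ^ 2) • (∑ c, ∑ d, ∑ b, (∑ a, R a l b m * R c k d a) • (xd c * (x d * x b)))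
        - (q ^ 2) • (∑ b, R k l b m • x b)
        - (q * kd l m) • x k := by
    intro k l
    rw [mul_assoc, move1 l m, mul_sub, mul_smul_comm, mul_smul_comm, mul_one]
    simp only [Finset.mul_sum, mul_smul_comm, move2a]
    simp only [smul_sub, Finset.sum_sub_distrib, Finset.smul_sum, smul_smul]
    congr 1
    · congr 1
      · rw [sum_perm4 (fun a b c d => (q * (R a l b m * (q * R c k d a))) • (xd c * (x d * x b)))]
        simp only [Finset.smul_sum, smul_smul, Finset.mul_sum, Finset.sum_smul]
        refine Finset.sum_congr rfl fun c _ => Finset.sum_congr rfl fun d _ =>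
          Finset.sum_congr rfl fun b _ => Finset.sum_congr rfl fun a _ => ?_
        congr 1; ring
      · rw [Finset.sum_comm]
        refine Finset.sum_congr rfl fun b _ => ?_
        rw [← Finset.sum_smul]
        congr 1
        simp [kd, mul_ite, Finset.sum_ite_eq]
        ring
  simp only [move2, smul_sub, Finset.sum_sub_distrib]
  rw [sub_sub]
  have hYZ : ((∑ k, ∑ l, (R i j k l - q * (kd i k * kd j l)) • q ^ 2 • ∑ b, R k l b m • x b)
      + ∑ k, ∑ l, (R i j k l - q * (kd i k * kd j l)) • (q * kd l m) • x k) = 0 := by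
    have hY : (∑ k, ∑ l, (R i j k l - q * (kd i k * kd j l)) • q ^ 2 • ∑ b, R k l b m • x b)
        = ∑ b, (∑ k, ∑ l, (R i j k l - q * (kd i k * kd j l)) * (q ^ 2 * R k l b m)) • x b := by
      simp only [Finset.smul_sum, smul_smul]
      rw [sum_rot12 (fun k l b => ((R i j k l - q * (kd i k * kd j l)) * (q ^ 2 * R k l b m)) • x b)]
      refine Finset.sum_congr rfl fun b _ => ?_
      simp only [Finset.sum_smul]
    have hZ : (∑ k, ∑ l, (R i j k l - q * (kd i k * kd j l)) • (q * kd l m) • x k)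
        = ∑ k, (∑ l, (R i j k l - q * (kd i k * kd j l)) * (q * kd l m)) • x k := by
      simp only [smul_smul]
      refine Finset.sum_congr rfl fun k _ => ?_
      simp only [Finset.sum_smul]
    rw [hY, hZ, ← Finset.sum_add_distrib]
    refine Finset.sum_eq_zero fun b _ => ?_
    rw [← add_smul]
    have e1 : (∑ k, ∑ l, (R i j k l - q * (kd i k * kd j l)) * (q ^ 2 * R k l b m))
        = q ^ 2 * ((q - q⁻¹) * R i j b m + kd i b * kd j m) - q ^ 3 * R i j b m := by
      rw [← hHecke i j b m]
      simp only [sub_mul, Finset.sum_sub_distrib]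
      congr 1
      · rw [Finset.mul_sum]
        refine Finset.sum_congr rfl fun k _ => ?_
        rw [Finset.mul_sum]
        exact Finset.sum_congr rfl fun l _ => by ring
      · simp [kd, ite_mul, mul_ite, mul_zero, zero_mul, mul_one, Finset.sum_ite_eq]
        ring
    have e2 : (∑ l, (R i j b l - q * (kd i b * kd j l)) * (q * kd l m))
        = q * R i j b m - q ^ 2 * (kd i b * kd j m) := by
      simp [kd, ite_mul, mul_ite, mul_zero, zero_mul, mul_one, Finset.sum_ite_eq,
        Finset.sum_ite_eq', sub_mul, Finset.sum_sub_distrib]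
      ring
    rw [e1, e2]
    have hq2q : q ^ 2 * q⁻¹ = q := by field_simp
    rw [show q ^ 2 * ((q - q⁻¹) * R i j b m + kd i b * kd j m) - q ^ 3 * R i j b m +
        (q * R i j b m - q ^ 2 * (kd i b * kd j m)) = (q - q ^ 2 * q⁻¹) * R i j b m by ring,
      hq2q, sub_self, zero_mul, zero_smul]
  rw [hYZ, sub_zero]
  -- cubic part
  have key : ∀ c d b : Fin N,
      (∑ k, ∑ l, ((R i j k l - q * (kd i k * kd j l)) * (q ^ 2 * ∑ a, R a l b m * R c k d a)))
        = q ^ 2 * ∑ c₂, ∑ d₂, ∑ g, R c i c₂ d₂ * R d₂ j g m * (R c₂ g d b - q * (kd c₂ d * kd g b)) := by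
    intro c d b
    have f1 : (∑ c₂, ∑ d₂, ∑ g, R c i c₂ d₂ * R d₂ j g m * R c₂ g d b)
        = ∑ k, ∑ l, ∑ a, R i j k l * (R a l b m * R c k d a) := by
      rw [hbraid c i j d b m]
      refine Finset.sum_congr rfl fun k _ => Finset.sum_congr rfl fun l _ =>
        Finset.sum_congr rfl fun a _ => ?_
      ring
    have e1 : (∑ k, ∑ l, ((R i j k l - q * (kd i k * kd j l)) * (q ^ 2 * ∑ a, R a l b m * R c k d a)))
        = q ^ 2 * (∑ k, ∑ l, ∑ a, R i j k l * (R a l b m * R c k d a))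
          - q ^ 3 * (∑ a, R a j b m * R c i d a) := by
      simp only [sub_mul, Finset.sum_sub_distrib]
      congr 1
      · simp only [Finset.mul_sum]
        refine Finset.sum_congr rfl fun k _ => Finset.sum_congr rfl fun l _ =>
          Finset.sum_congr rfl fun a _ => ?_
        ring
      · simp only [Finset.mul_sum]
        simp [kd, ite_mul, mul_ite, mul_zero, zero_mul, mul_one, Finset.sum_ite_eq]
        refine Finset.sum_congr rfl fun a _ => ?_
        ring
    have e2 : (q ^ 2 * ∑ c₂, ∑ d₂, ∑ g, R c i c₂ d₂ * R d₂ j g m * (R c₂ g d b - q * (kd c₂ d * kd g b)))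
        = q ^ 2 * (∑ c₂, ∑ d₂, ∑ g, R c i c₂ d₂ * R d₂ j g m * R c₂ g d b)
          - q ^ 3 * (∑ d₂, R c i d d₂ * R d₂ j b m) := by
      simp only [mul_sub, Finset.sum_sub_distrib, Finset.mul_sum]
      congr 1
      simp [kd, ite_mul, mul_ite, mul_zero, zero_mul, mul_one, Finset.sum_ite_eq,
        Finset.sum_ite_eq']
      refine Finset.sum_congr rfl fun a _ => ?_
      ring
    rw [e1, e2, f1]
    congr 1
    refine congrArg (q ^ 3 * ·) (Finset.sum_congr rfl fun a _ => ?_)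
    ring
  simp only [Finset.smul_sum, smul_smul]
  rw [sum_rot23 (fun k l c d b => ((R i j k l - q * (kd i k * kd j l)) *
    (q ^ 2 * ∑ a, R a l b m * R c k d a)) • (xd c * (x d * x b)))]
  refine Finset.sum_congr rfl fun c _ => Finset.sum_congr rfl fun d _ =>
    Finset.sum_congr rfl fun b _ => ?_
  simp only [← Finset.sum_smul]
  rw [key c d b]
end

section
/- Let x_i, x^j be elements of an associative algebra satisfying P x₍₁₎x₍₂₎ = x₍₁₎x₍₂₎ (symmetric creation relations), x⟨²|x⟨¹|P = x⟨²|x⟨¹| and x⟨¹|R₁₂x₍₁₎ = q⁻¹ x₍₂₎x⟨²| + I₂, where P := P^q + P^μ is the sum of two of the three spectral projectors of a BMW symmetry R. Then the matrix L with entries l_i^j = x_i x^j satisfies P₁₂ L₁ R₁₂ L₁ - L₁ R₁₂ L₁ P₁₂ = P₁₂ L₁ - L₁ P₁₂. -/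
open Finset

set_option maxHeartbeats 1000000 in
set_option maxRecDepth 4000 in
theorem stmt_12 (N : ℕ) (A : Type*) [Ring A] [Algebra ℂ A]
    (q μ : ℂ) (hq0 : q ≠ 0)
    (R : Fin N → Fin N → Fin N → Fin N → ℂ)        -- BMW symmetry R_{ij}^{kl}
    (Pq Pneg Pmu : Fin N → Fin N → Fin N → Fin N → ℂ)  -- spectral projectors of R
    -- the three projectors sum to the identity
    (hsum : ∀ i j k l : Fin N,
      Pq i j k l + Pneg i j k l + Pmu i j k l = kd i k * kd j l)
    (x : Fin N → A) (xd : Fin N → A)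
    -- 𝒫 x₍₁₎x₍₂₎ = x₍₁₎x₍₂₎  with 𝒫 = P^q + P^μ
    (hP1 : ∀ i j : Fin N,
      ∑ k, ∑ l, (Pq i j k l + Pmu i j k l) • (x k * x l) = x i * x j)
    -- x⟨²|x⟨¹|𝒫 = x⟨²|x⟨¹|
    (hP2 : ∀ i j : Fin N,
      ∑ k, ∑ l, (Pq k l i j + Pmu k l i j) • (xd l * xd k) = xd j * xd i)
    -- x⟨¹|R₁₂x₍₁₎ = q⁻¹ x₍₂₎x⟨²| + I₂
    (hperm : ∀ i j : Fin N,
      ∑ a, ∑ b, R a i b j • (xd a * x b)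
        = q⁻¹ • (x i * xd j) + algebraMap ℂ A (kd i j)) :
    -- 𝒫₁₂ L₁ R₁₂ L₁ - L₁ R₁₂ L₁ 𝒫₁₂ = 𝒫₁₂ L₁ - L₁ 𝒫₁₂, entrywise with l_i^j = x_i x^j
    ∀ i j m n : Fin N,
      (∑ a, ∑ b, ∑ c, ∑ e,
          ((Pq i j a b + Pmu i j a b) * R c b e n) • (x a * xd c * (x e * xd m)))
        - (∑ a, ∑ c, ∑ d, ∑ e,
          (R a j c d * (Pq e d m n + Pmu e d m n)) • (x i * xd a * (x c * xd e)))
      = (∑ a, (Pq i j a n + Pmu i j a n) • (x a * xd m))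
        - (∑ a, (Pq a j m n + Pmu a j m n) • (x i * xd a)) := by

  intro i j m n
  have h1 : (∑ a, ∑ b, ∑ c, ∑ e,
        ((Pq i j a b + Pmu i j a b) * R c b e n) • (x a * xd c * (x e * xd m)))
      = q⁻¹ • (x i * x j * (xd n * xd m))
        + ∑ a, (Pq i j a n + Pmu i j a n) • (x a * xd m) := by
    calc (∑ a, ∑ b, ∑ c, ∑ e,
            ((Pq i j a b + Pmu i j a b) * R c b e n) • (x a * xd c * (x e * xd m)))
        = ∑ a, ∑ b, (Pq i j a b + Pmu i j a b) •
            (x a * ((∑ c, ∑ e, R c b e n • (xd c * x e)) * xd m)) := by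
          simp only [Finset.smul_sum, Finset.sum_mul, Finset.mul_sum, smul_mul_assoc,
            mul_smul_comm, mul_smul, mul_assoc]
      _ = ∑ a, ∑ b, (Pq i j a b + Pmu i j a b) •
            (x a * ((q⁻¹ • (x b * xd n) + algebraMap ℂ A (kd b n)) * xd m)) := by
          simp only [hperm]
      _ = q⁻¹ • (x i * x j * (xd n * xd m))
            + ∑ a, (Pq i j a n + Pmu i j a n) • (x a * xd m) := by
          have step : ∀ a b : Fin N,
              (Pq i j a b + Pmu i j a b) •
                (x a * ((q⁻¹ • (x b * xd n) + algebraMap ℂ A (kd b n)) * xd m))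
              = (Pq i j a b + Pmu i j a b) • (x a * x b) * (q⁻¹ • (xd n * xd m))
                + ((Pq i j a b + Pmu i j a b) * kd b n) • (x a * xd m) := by
            intro a b
            simp only [mul_add, add_mul, smul_add, smul_mul_assoc, mul_smul_comm, smul_smul,
              ← Algebra.smul_def, mul_assoc]
            ring_nf
          simp only [step, Finset.sum_add_distrib, ← Finset.sum_mul]
          rw [hP1]
          congr 1
          · rw [mul_smul_comm, mul_assoc]
          · refine Finset.sum_congr rfl fun a _ => ?_
            rw [← Finset.sum_smul]
            congr 1
            simp [kd, mul_ite]
  have h2 : (∑ a, ∑ c, ∑ d, ∑ e,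
        (R a j c d * (Pq e d m n + Pmu e d m n)) • (x i * xd a * (x c * xd e)))
      = q⁻¹ • (x i * x j * (xd n * xd m))
        + ∑ a, (Pq a j m n + Pmu a j m n) • (x i * xd a) := by
    have swap : (∑ a, ∑ c, ∑ d, ∑ e,
            (R a j c d * (Pq e d m n + Pmu e d m n)) • (x i * xd a * (x c * xd e)))
        = ∑ d, ∑ e, ∑ a, ∑ c,
            (R a j c d * (Pq e d m n + Pmu e d m n)) • (x i * xd a * (x c * xd e)) := by
      calc (∑ a, ∑ c, ∑ d, ∑ e,
            (R a j c d * (Pq e d m n + Pmu e d m n)) • (x i * xd a * (x c * xd e)))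
          = ∑ a, ∑ d, ∑ c, ∑ e,
            (R a j c d * (Pq e d m n + Pmu e d m n)) • (x i * xd a * (x c * xd e)) :=
            Finset.sum_congr rfl fun a _ => Finset.sum_comm
        _ = ∑ d, ∑ a, ∑ c, ∑ e,
            (R a j c d * (Pq e d m n + Pmu e d m n)) • (x i * xd a * (x c * xd e)) :=
            Finset.sum_comm
        _ = ∑ d, ∑ a, ∑ e, ∑ c,
            (R a j c d * (Pq e d m n + Pmu e d m n)) • (x i * xd a * (x c * xd e)) :=
            Finset.sum_congr rfl fun d _ => Finset.sum_congr rfl fun a _ => Finset.sum_comm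
        _ = ∑ d, ∑ e, ∑ a, ∑ c,
            (R a j c d * (Pq e d m n + Pmu e d m n)) • (x i * xd a * (x c * xd e)) :=
            Finset.sum_congr rfl fun d _ => Finset.sum_comm
    rw [swap]
    calc (∑ d, ∑ e, ∑ a, ∑ c,
            (R a j c d * (Pq e d m n + Pmu e d m n)) • (x i * xd a * (x c * xd e)))
        = ∑ d, ∑ e, (Pq e d m n + Pmu e d m n) •
            (x i * ((∑ a, ∑ c, R a j c d • (xd a * x c)) * xd e)) := by
          simp_rw [mul_comm (R _ j _ _)]
          simp only [Finset.smul_sum, Finset.sum_mul, Finset.mul_sum, smul_mul_assoc,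
            mul_smul_comm, mul_smul, mul_assoc]
      _ = ∑ d, ∑ e, (Pq e d m n + Pmu e d m n) •
            (x i * ((q⁻¹ • (x j * xd d) + algebraMap ℂ A (kd j d)) * xd e)) := by
          simp only [hperm]
      _ = q⁻¹ • (x i * x j * (xd n * xd m))
            + ∑ a, (Pq a j m n + Pmu a j m n) • (x i * xd a) := by
          have step : ∀ d e : Fin N,
              (Pq e d m n + Pmu e d m n) •
                (x i * ((q⁻¹ • (x j * xd d) + algebraMap ℂ A (kd j d)) * xd e))
              = (q⁻¹ • (x i * x j)) * ((Pq e d m n + Pmu e d m n) • (xd d * xd e))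
                + (kd j d * (Pq e d m n + Pmu e d m n)) • (x i * xd e) := by
            intro d e
            simp only [mul_add, add_mul, smul_add, smul_mul_assoc, mul_smul_comm, smul_smul,
              ← Algebra.smul_def, mul_assoc]
            ring_nf
          simp only [step, Finset.sum_add_distrib, ← Finset.mul_sum]
          rw [Finset.sum_comm (f := fun d e => (Pq e d m n + Pmu e d m n) • (xd d * xd e))]
          rw [hP2]
          congr 1
          · rw [smul_mul_assoc, mul_assoc]
          · rw [Finset.sum_comm]
            refine Finset.sum_congr rfl fun e _ => ?_
            rw [← Finset.sum_smul]
            congr 1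
            simp [kd, ite_mul]
  rw [h1, h2]
  abel
end

section
/- If the rational current braiding R(u,v) := R - I/(u-v) is built from an involutive symmetry R (R² = I satisfying the braid relation), then R(u,v) satisfies the spectral-parameter braid relation R₁₂(u,v)R₂₃(u,w)R₁₂(v,w) = R₂₃(v,w)R₁₂(u,w)R₂₃(u,v) for pairwise distinct u, v, w. -/
open TensorProduct

/-- `R ⊗ id` acting on `(V ⊗ V) ⊗ V`. -/
noncomputable def R₁₂ {V : Type*} [AddCommGroup V] [Module ℂ V]
    (R : Module.End ℂ (V ⊗[ℂ] V)) : Module.End ℂ ((V ⊗[ℂ] V) ⊗[ℂ] V) :=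
  TensorProduct.map R LinearMap.id

/-- `id ⊗ R` acting on `(V ⊗ V) ⊗ V` via the associator. -/
noncomputable def R₂₃ {V : Type*} [AddCommGroup V] [Module ℂ V]
    (R : Module.End ℂ (V ⊗[ℂ] V)) : Module.End ℂ ((V ⊗[ℂ] V) ⊗[ℂ] V) :=
  (TensorProduct.assoc ℂ V V V).symm.toLinearMap ∘ₗ
    (TensorProduct.map LinearMap.id R) ∘ₗ (TensorProduct.assoc ℂ V V V).toLinearMap

lemma key_braid {S : Type*} [Ring S] [Algebra ℂ S] (A B : S)
    (hA : A * A = 1) (hB : B * B = 1) (hbr : A * B * A = B * A * B)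
    (a b c : ℂ) (h : b * a + b * c = a * c) :
    (A - a • 1) * (B - b • 1) * (A - c • 1)
      = (B - c • 1) * (A - b • 1) * (B - a • 1) := by
  simp only [mul_sub, sub_mul, smul_mul_assoc, mul_smul_comm, mul_one, one_mul, smul_smul,
    hA, hB]
  rw [hbr]
  match_scalars
  all_goals ring_nf
  all_goals (try linear_combination h)
  all_goals linear_combination -h

lemma R12_sq {V : Type*} [AddCommGroup V] [Module ℂ V]
    (R : Module.End ℂ (V ⊗[ℂ] V)) (hinv : R * R = 1) :
    R₁₂ R * R₁₂ R = 1 := by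
  show TensorProduct.map R LinearMap.id ∘ₗ TensorProduct.map R LinearMap.id = _
  rw [← TensorProduct.map_comp]
  have : R ∘ₗ R = LinearMap.id := hinv
  rw [this, LinearMap.id_comp, TensorProduct.map_id]
  rfl

lemma R23_conj {V : Type*} [AddCommGroup V] [Module ℂ V]
    (R : Module.End ℂ (V ⊗[ℂ] V)) :
    R₂₃ R = (TensorProduct.assoc ℂ V V V).symm.conj (TensorProduct.map LinearMap.id R) := by
  rw [LinearEquiv.conj_apply]
  rfl

lemma R23_sq {V : Type*} [AddCommGroup V] [Module ℂ V]
    (R : Module.End ℂ (V ⊗[ℂ] V)) (hinv : R * R = 1) :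
    R₂₃ R * R₂₃ R = 1 := by
  have h : R ∘ₗ R = LinearMap.id := hinv
  rw [R23_conj]
  show _ ∘ₗ _ = _
  rw [← LinearEquiv.conj_comp, ← TensorProduct.map_comp, h, LinearMap.id_comp,
    TensorProduct.map_id, LinearEquiv.conj_id]
  rfl

theorem stmt_13 {V : Type*} [AddCommGroup V] [Module ℂ V] [FiniteDimensional ℂ V]
    (R : Module.End ℂ (V ⊗[ℂ] V))
    (hinv : R * R = 1)
    (hbraid : R₁₂ R * R₂₃ R * R₁₂ R = R₂₃ R * R₁₂ R * R₂₃ R)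
    (u v w : ℂ) (huv : u ≠ v) (huw : u ≠ w) (hvw : v ≠ w) :
    (R₁₂ R - (u - v)⁻¹ • 1) * (R₂₃ R - (u - w)⁻¹ • 1) * (R₁₂ R - (v - w)⁻¹ • 1)
      = (R₂₃ R - (v - w)⁻¹ • 1) * (R₁₂ R - (u - w)⁻¹ • 1) * (R₂₃ R - (u - v)⁻¹ • 1) := by
  have h1 : u - v ≠ 0 := sub_ne_zero.mpr huv
  have h2 : u - w ≠ 0 := sub_ne_zero.mpr huw
  have h3 : v - w ≠ 0 := sub_ne_zero.mpr hvw
  exact key_braid (R₁₂ R) (R₂₃ R) (R12_sq R hinv) (R23_sq R hinv) hbraid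
    (u - v)⁻¹ (u - w)⁻¹ (v - w)⁻¹ (by field_simp; ring)
end
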